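/- Suppose c ∈ F attains the minimum, i.e., L_{YX}(c) = ℓ_{YX}. Let u, u' ∈ F, let x, x' ∈ X ∪ X⁻¹, and suppose there exist v ∈ F and y ∈ Y ∪ Y⁻¹ such that the oriented edge (v, vy) lies on the Y-geodesic from uc to uxc and also lies on the Y-geodesic from u'c to u'x'c. Then |u⁻¹u'|_X ≤ 4λ² + 2. -/

import Mathlib

/-- The word length of `g` with respect to `S ∪ S⁻¹`. -/
noncomputable def wordLength {G : Type*} [Group G] (S : Set G) (g : G) : ℕ :=
  sInf {m : ℕ | ∃ f : Fin m → G, (∀ i, f i ∈ S ∨ (f i)⁻¹ ∈ S) ∧ g = (List.ofFn f).prod}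

/-- `X : ι → G` indexes a free basis of the group `G`. -/
def IsFreeBasis {G : Type*} [Group G] {ι : Type*} (X : ι → G) : Prop :=
  Function.Bijective (FreeGroup.lift X : FreeGroup ι →* G)

/-- `L_{YX}(c) = max_{x ∈ X} |c⁻¹ x c|_Y`, the length of the morphism between unit roses
determined on vertices by `u ↦ u⋅c`. -/
noncomputable def morphismLength {F : Type*} [Group F] {n : ℕ}
    (X Y : Fin n → F) (c : F) : ℕ :=
  Finset.univ.sup fun i => wordLength (Set.range Y) (c⁻¹ * X i * c)

/-- The oriented edge `(v, v⋅y)` of the Cayley tree of `(F, S)` lies on the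
`S`-geodesic from `a` to `b`. -/
noncomputable def liesOnGeodesic {F : Type*} [Group F] (S : Set F) (v y a b : F) : Prop :=
  wordLength S (a⁻¹ * v) + 1 + wordLength S ((v * y)⁻¹ * b) = wordLength S (a⁻¹ * b)

/-! Let `c'` realize `ℓ_{XY}` and put `a = c c'`. Conjugation by `c` stretches lengths from `X` to
`Y` by at most `ℓ_{YX}`, and conjugation by `c'` from `Y` to `X` by at most `ℓ_{XY}`; hence conjugation
by `a` sends every letter of `X` to an element of `X`-length at most `ℓ_{XY} ℓ_{YX}`. In a free group of
rank at least two some basis letter `x` has `|a⁻¹ x a| = 2|a| + 1`, which bounds `|a|`. The common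
edge puts `uc` and `u'c` within `ℓ_{YX}` of `v` in the `Y`-metric, so `|a⁻¹ u⁻¹ u' a|_X ≤ 2 ℓ_{XY} ℓ_{YX}`,
and undoing the conjugation by `a` costs at most `2|a|`. -/

section WordLength

variable {G H : Type*} [Group G] [Group H] {S : Set G}

theorem wordLength_le_length {l : List G} (hl : ∀ a ∈ l, a ∈ S ∨ a⁻¹ ∈ S) :
    wordLength S l.prod ≤ l.length :=
  Nat.sInf_le ⟨l.get, fun i => hl _ (l.get_mem i), by rw [List.ofFn_get]⟩

theorem exists_list_length_eq_wordLength {g : G} (hg : g ∈ Subgroup.closure S) :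
    ∃ l : List G, (∀ a ∈ l, a ∈ S ∨ a⁻¹ ∈ S) ∧ l.prod = g ∧ l.length = wordLength S g := by
  rw [← Subgroup.mem_toSubmonoid, Subgroup.closure_toSubmonoid] at hg
  obtain ⟨l, hl, rfl⟩ := Submonoid.exists_list_of_mem_closure hg
  obtain ⟨f, hf, hprod⟩ := Nat.sInf_mem
    (⟨l.length, l.get, fun i => hl _ (l.get_mem i), by rw [List.ofFn_get]⟩ :
      {m : ℕ | ∃ f : Fin m → G, (∀ i, f i ∈ S ∨ (f i)⁻¹ ∈ S) ∧ l.prod = (List.ofFn f).prod}.Nonempty)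
  refine ⟨List.ofFn f, ?_, hprod.symm, List.length_ofFn⟩
  simpa only [List.forall_mem_ofFn_iff] using hf

theorem wordLength_one : wordLength S 1 = 0 :=
  Nat.le_zero.mp (wordLength_le_length (l := []) (by simp))

variable (hS : Subgroup.closure S = ⊤)
include hS

theorem wordLength_mul_le (g h : G) : wordLength S (g * h) ≤ wordLength S g + wordLength S h := by
  obtain ⟨l, hl, rfl, hlen⟩ := exists_list_length_eq_wordLength (hS ▸ Subgroup.mem_top g)
  obtain ⟨m, hm, rfl, hmlen⟩ := exists_list_length_eq_wordLength (hS ▸ Subgroup.mem_top h)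
  rw [← hlen, ← hmlen, ← List.length_append, ← List.prod_append]
  exact wordLength_le_length fun a ha => (List.mem_append.mp ha).elim (hl a) (hm a)

theorem wordLength_list_prod_le (l : List G) :
    wordLength S l.prod ≤ (l.map (wordLength S)).sum := by
  induction l with
  | nil => exact wordLength_one.le
  | cons a l ih =>
    simpa only [List.prod_cons, List.map_cons, List.sum_cons] using
      (wordLength_mul_le hS a l.prod).trans (Nat.add_le_add_left ih _)

theorem wordLength_inv_le (g : G) : wordLength S g⁻¹ ≤ wordLength S g := by
  obtain ⟨l, hl, rfl, hlen⟩ := exists_list_length_eq_wordLength (hS ▸ Subgroup.mem_top g)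
  rw [← hlen, List.prod_inv_reverse, ← List.length_map (f := fun a : G => a⁻¹), ← List.length_reverse]
  refine wordLength_le_length fun a ha => ?_
  obtain ⟨b, hb, rfl⟩ := List.mem_map.mp (List.mem_reverse.mp ha)
  rw [inv_inv]
  exact (hl b hb).symm

theorem wordLength_inv (g : G) : wordLength S g⁻¹ = wordLength S g :=
  le_antisymm (wordLength_inv_le hS g) (by simpa using wordLength_inv_le hS g⁻¹)

theorem wordLength_le_two_mul_add_conj (a g : G) :
    wordLength S g ≤ 2 * wordLength S a + wordLength S (a⁻¹ * g * a) := by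
  calc wordLength S g = wordLength S (a * (a⁻¹ * g * a) * a⁻¹) := by group
    _ ≤ wordLength S a + wordLength S (a⁻¹ * g * a) + wordLength S a⁻¹ :=
      (wordLength_mul_le hS _ _).trans (Nat.add_le_add_right (wordLength_mul_le hS _ _) _)
    _ = 2 * wordLength S a + wordLength S (a⁻¹ * g * a) := by rw [wordLength_inv hS]; ring

theorem wordLength_map_le {T : Set H} (hT : Subgroup.closure T = ⊤)
    (φ : G →* H) {k : ℕ} (hφ : ∀ s ∈ S, wordLength T (φ s) ≤ k) (g : G) :
    wordLength T (φ g) ≤ k * wordLength S g := by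
  obtain ⟨l, hl, rfl, hlen⟩ := exists_list_length_eq_wordLength (hS ▸ Subgroup.mem_top g)
  have hletter : ∀ a ∈ l, wordLength T (φ a) ≤ k := fun a ha => (hl a ha).elim (hφ a) fun h => by
    simpa only [map_inv, wordLength_inv hT] using hφ _ h
  calc wordLength T (φ l.prod) ≤ (l.map (wordLength T ∘ φ)).sum := by
        simpa only [map_list_prod, List.map_map] using wordLength_list_prod_le hT (l.map φ)
    _ ≤ (l.map (wordLength T ∘ φ)).length • k :=
        List.sum_le_card_nsmul _ _ (by simpa using hletter)
    _ = k * wordLength S l.prod := by rw [List.length_map, hlen, smul_eq_mul, mul_comm]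

end WordLength

namespace FreeGroup

variable {α : Type*} [DecidableEq α]

theorem norm_inv_mul_of_mul (β : FreeGroup α) (i : α) (h : ∀ p ∈ β.toWord.head?, p.1 ≠ i) :
    norm (β⁻¹ * of i * β) = 2 * norm β + 1 := by
  set w := β.toWord
  have hword : β⁻¹ * of i * β = mk (invRev w ++ (i, true) :: w) := by
    rw [← mk_toWord (x := β), inv_mk, of, mul_mk, mul_mk, List.append_assoc, List.singleton_append]
  have hred : IsReduced (invRev w ++ (i, true) :: w) := by
    refine List.isChain_append.mpr ⟨?_, ?_, ?_⟩
    · exact toWord_inv β ▸ isReduced_toWord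
    · rcases hw : w with _ | ⟨p, w'⟩
      · exact IsReduced.singleton
      · refine isReduced_cons_cons.mpr ⟨fun hp => absurd hp.symm (h p (by simp [hw])), ?_⟩
        exact hw ▸ isReduced_toWord
    · intro p hp q hq
      simp only [invRev, List.getLast?_reverse, List.head?_map, Option.mem_map] at hp
      obtain ⟨p', hp', rfl⟩ := hp
      simp only [List.head?_cons, Option.mem_some_iff] at hq
      subst hq
      exact fun hpi => absurd hpi (h p' hp')
  rw [hword, norm, toWord_mk, hred.reduce_eq]
  simp only [List.length_append, invRev_length, List.length_cons, norm, w]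
  ring

theorem two_mul_norm_add_one_le (β : FreeGroup α) {i j : α} (hij : i ≠ j) :
    2 * norm β + 1 ≤ max (norm (β⁻¹ * of i * β)) (norm (β⁻¹ * of j * β)) := by
  rcases hβ : β.toWord.head? with _ | p
  · obtain rfl : β = 1 := toWord_eq_nil_iff.mp (List.head?_eq_none_iff.mp hβ)
    simp
  · by_cases hpi : p.1 = i
    · rw [← norm_inv_mul_of_mul β j (by simpa [hβ, hpi] using hij)]
      exact le_max_right _ _
    · rw [← norm_inv_mul_of_mul β i (by simpa [hβ] using hpi)]
      exact le_max_left _ _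

end FreeGroup

namespace IsFreeBasis

variable {G : Type*} [Group G] {ι : Type*} {X : ι → G} (hX : IsFreeBasis X)
include hX

theorem closure_range_eq_top : Subgroup.closure (Set.range X) = ⊤ :=
  FreeGroup.lift_surjective_iff_closure_range_eq_top.mp hX.2

theorem wordLength_lift [DecidableEq ι] (β : FreeGroup ι) :
    wordLength (Set.range X) (FreeGroup.lift X β) = FreeGroup.norm β := by
  refine le_antisymm ?_ ?_
  · conv_lhs => rw [← FreeGroup.mk_toWord (x := β), FreeGroup.lift_mk]
    rw [FreeGroup.norm, ← List.length_map (f := fun p : ι × Bool => cond p.2 (X p.1) (X p.1)⁻¹)]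
    refine wordLength_le_length fun a ha => ?_
    obtain ⟨⟨k, _ | _⟩, -, rfl⟩ := List.mem_map.mp ha
    · exact Or.inr ⟨k, (inv_inv _).symm⟩
    · exact Or.inl ⟨k, rfl⟩
  · set e := MulEquiv.ofBijective _ hX
    have hgen (k : ι) : e.symm (X k) = FreeGroup.of k :=
      e.symm_apply_eq.mpr FreeGroup.lift_apply_of.symm
    have hletter {a : G} (ha : a ∈ Set.range X ∨ a⁻¹ ∈ Set.range X) :
        FreeGroup.norm (e.symm a) ≤ 1 := by
      rcases ha with ⟨k, rfl⟩ | ⟨k, hk⟩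
      · rw [hgen, FreeGroup.norm_of]
      · rw [← inv_inv a, ← hk, map_inv, FreeGroup.norm_inv_eq, hgen, FreeGroup.norm_of]
    have hword (l : List G) (hl : ∀ a ∈ l, a ∈ Set.range X ∨ a⁻¹ ∈ Set.range X) :
        FreeGroup.norm (e.symm l.prod) ≤ l.length := by
      induction l with
      | nil => simp
      | cons a l ih =>
        rw [List.prod_cons, map_mul, List.length_cons, add_comm]
        grw [FreeGroup.norm_mul_le, hletter (hl a List.mem_cons_self),
          ih fun b hb => hl b (List.mem_cons_of_mem a hb)]
    obtain ⟨l, hl, hprod, hlen⟩ :=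
      exists_list_length_eq_wordLength (hX.closure_range_eq_top ▸ Subgroup.mem_top (e β))
    have := hword l hl
    rwa [hprod, hlen, MulEquiv.symm_apply_apply] at this

theorem two_mul_wordLength_add_one_le {i j : ι} (hij : i ≠ j) (a : G) :
    2 * wordLength (Set.range X) a + 1 ≤
      max (wordLength (Set.range X) (a⁻¹ * X i * a)) (wordLength (Set.range X) (a⁻¹ * X j * a)) := by
  classical
  obtain ⟨β, rfl⟩ := hX.2 a
  simpa only [← FreeGroup.lift_apply_of (f := X), ← map_inv, ← map_mul, hX.wordLength_lift]
    using β.two_mul_norm_add_one_le hij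

end IsFreeBasis

theorem liesOnGeodesic.wordLength_lt {F : Type*} [Group F] {S : Set F} {v y a b : F}
    (h : liesOnGeodesic S v y a b) : wordLength S (a⁻¹ * v) < wordLength S (a⁻¹ * b) := by
  unfold liesOnGeodesic at h
  omega

section MorphismLength

variable {F : Type*} [Group F] {n : ℕ} {X Y : Fin n → F}

theorem wordLength_conj_le_morphismLength (hY : IsFreeBasis Y) (c : F) {z : F}
    (hz : z ∈ Set.range X ∪ (Set.range X)⁻¹) :
    wordLength (Set.range Y) (c⁻¹ * z * c) ≤ morphismLength X Y c := by
  have hgen (i : Fin n) : wordLength (Set.range Y) (c⁻¹ * X i * c) ≤ morphismLength X Y c :=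
    Finset.le_sup (f := fun i => wordLength (Set.range Y) (c⁻¹ * X i * c)) (Finset.mem_univ i)
  rcases hz with ⟨i, rfl⟩ | ⟨i, hi⟩
  · exact hgen i
  · have hinv : c⁻¹ * z * c = (c⁻¹ * X i * c)⁻¹ := by rw [hi]; group
    rw [hinv, wordLength_inv hY.closure_range_eq_top]
    exact hgen i

theorem wordLength_conj_le_morphismLength_mul (hX : IsFreeBasis X) (hY : IsFreeBasis Y)
    (c g : F) :
    wordLength (Set.range Y) (c⁻¹ * g * c) ≤ morphismLength X Y c * wordLength (Set.range X) g := by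
  simpa only [MulEquiv.coe_toMonoidHom, MulAut.conj_apply, inv_inv] using
    wordLength_map_le hX.closure_range_eq_top hY.closure_range_eq_top (MulAut.conj c⁻¹).toMonoidHom
      (k := morphismLength X Y c)
      (fun _ hs => by
        simpa only [MulEquiv.coe_toMonoidHom, MulAut.conj_apply, inv_inv] using
          wordLength_conj_le_morphismLength hY c (Or.inl hs)) g

theorem morphismLength_mul_le (hX : IsFreeBasis X) (hY : IsFreeBasis Y) (c c' : F) :
    morphismLength X X (c * c') ≤ morphismLength Y X c' * morphismLength X Y c := by
  refine Finset.sup_le fun i _ => ?_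
  calc wordLength (Set.range X) ((c * c')⁻¹ * X i * (c * c'))
      = wordLength (Set.range X) (c'⁻¹ * (c⁻¹ * X i * c) * c') := by group
    _ ≤ morphismLength Y X c' * wordLength (Set.range Y) (c⁻¹ * X i * c) :=
      wordLength_conj_le_morphismLength_mul hY hX c' _
    _ ≤ morphismLength Y X c' * morphismLength X Y c :=
      Nat.mul_le_mul_left _ (wordLength_conj_le_morphismLength hY c (Or.inl ⟨i, rfl⟩))

theorem IsFreeBasis.two_mul_wordLength_add_one_le_morphismLength (hX : IsFreeBasis X)
    (hn : 2 ≤ n) (a : F) :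
    2 * wordLength (Set.range X) a + 1 ≤ morphismLength X X a :=
  (hX.two_mul_wordLength_add_one_le (i := ⟨0, by omega⟩) (j := ⟨1, hn⟩) (by simp) a).trans <|
    max_le (wordLength_conj_le_morphismLength hX a (Or.inl ⟨_, rfl⟩))
      (wordLength_conj_le_morphismLength hX a (Or.inl ⟨_, rfl⟩))

theorem wordLength_inv_mul_lt_of_liesOnGeodesic (hY : IsFreeBasis Y) {c u x v y : F}
    (hx : x ∈ Set.range X ∪ (Set.range X)⁻¹)
    (h : liesOnGeodesic (Set.range Y) v y (u * c) (u * x * c)) :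
    wordLength (Set.range Y) ((u * c)⁻¹ * v) < morphismLength X Y c := by
  have hlt := h.wordLength_lt
  rw [show (u * c)⁻¹ * (u * x * c) = c⁻¹ * x * c by group] at hlt
  exact hlt.trans_le (wordLength_conj_le_morphismLength hY c hx)

theorem wordLength_conj_le_of_common_edge (hY : IsFreeBasis Y) {c u u' x x' v y : F}
    (hx : x ∈ Set.range X ∪ (Set.range X)⁻¹) (hx' : x' ∈ Set.range X ∪ (Set.range X)⁻¹)
    (h : liesOnGeodesic (Set.range Y) v y (u * c) (u * x * c))
    (h' : liesOnGeodesic (Set.range Y) v y (u' * c) (u' * x' * c)) :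
    wordLength (Set.range Y) (c⁻¹ * (u⁻¹ * u') * c) ≤ 2 * morphismLength X Y c := by
  have hT := hY.closure_range_eq_top
  have hlt := wordLength_inv_mul_lt_of_liesOnGeodesic hY hx h
  have hlt' := wordLength_inv_mul_lt_of_liesOnGeodesic hY hx' h'
  calc wordLength (Set.range Y) (c⁻¹ * (u⁻¹ * u') * c)
      = wordLength (Set.range Y) ((u * c)⁻¹ * v * ((u' * c)⁻¹ * v)⁻¹) := by group
    _ ≤ wordLength (Set.range Y) ((u * c)⁻¹ * v) + wordLength (Set.range Y) ((u' * c)⁻¹ * v) := by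
      rw [← wordLength_inv hT ((u' * c)⁻¹ * v)]
      exact wordLength_mul_le hT _ _
    _ ≤ 2 * morphismLength X Y c := by omega

end MorphismLength

/-- Lemma 4.3 in vertex coordinates: if `c` realizes the minimal morphism length and the
images of the edges from `u` to `u⋅x` and from `u'` to `u'⋅x'` under the morphism
`u ↦ u⋅c` traverse a common oriented edge `(v, v⋅y)`, then `|u⁻¹u'|_X ≤ 4λ² + 2`. -/
theorem wordLength_le_of_common_edge {F : Type*} [Group F] {n : ℕ} (hn : 2 ≤ n)
    (X Y : Fin n → F) (hX : IsFreeBasis X) (hY : IsFreeBasis Y)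
    (c : F) (hc : morphismLength X Y c = sInf (Set.range (morphismLength X Y)))
    (u u' x x' : F)
    (hx : x ∈ Set.range X ∪ (Set.range X)⁻¹)
    (hx' : x' ∈ Set.range X ∪ (Set.range X)⁻¹)
    (h : ∃ v : F, ∃ y ∈ Set.range Y ∪ (Set.range Y)⁻¹,
      liesOnGeodesic (Set.range Y) v y (u * c) (u * x * c) ∧
      liesOnGeodesic (Set.range Y) v y (u' * c) (u' * x' * c)) :
    wordLength (Set.range X) (u⁻¹ * u') ≤
      4 * (max (sInf (Set.range (morphismLength X Y)))
        (sInf (Set.range (morphismLength Y X)))) ^ 2 + 2 := by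
  obtain ⟨v, y, -, hv, hv'⟩ := h
  set ℓ₁ := sInf (Set.range (morphismLength X Y))
  set ℓ₂ := sInf (Set.range (morphismLength Y X))
  obtain ⟨c', hc'⟩ : ℓ₂ ∈ Set.range (morphismLength Y X) := Nat.sInf_mem (Set.range_nonempty _)
  have hmid : wordLength (Set.range Y) (c⁻¹ * (u⁻¹ * u') * c) ≤ 2 * ℓ₁ :=
    hc ▸ wordLength_conj_le_of_common_edge hY hx hx' hv hv'
  set a := c * c'
  have ha : 2 * wordLength (Set.range X) a + 1 ≤ ℓ₂ * ℓ₁ :=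
    (hX.two_mul_wordLength_add_one_le_morphismLength hn a).trans
      (hc ▸ hc' ▸ morphismLength_mul_le hX hY c c')
  have hconj : wordLength (Set.range X) (a⁻¹ * (u⁻¹ * u') * a) ≤ ℓ₂ * (2 * ℓ₁) := by
    rw [show a⁻¹ * (u⁻¹ * u') * a = c'⁻¹ * (c⁻¹ * (u⁻¹ * u') * c) * c' by simp only [a]; group]
    exact (wordLength_conj_le_morphismLength_mul hY hX c' _).trans
      (hc' ▸ Nat.mul_le_mul_left _ hmid)
  have hprod : ℓ₂ * ℓ₁ ≤ max ℓ₁ ℓ₂ ^ 2 := by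
    rw [sq]
    exact Nat.mul_le_mul (le_max_right _ _) (le_max_left _ _)
  calc wordLength (Set.range X) (u⁻¹ * u')
      ≤ 2 * wordLength (Set.range X) a + wordLength (Set.range X) (a⁻¹ * (u⁻¹ * u') * a) :=
        wordLength_le_two_mul_add_conj hX.closure_range_eq_top a _
    _ ≤ 4 * max ℓ₁ ℓ₂ ^ 2 + 2 := by nlinarith
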